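/- For every x in [0,1], f(1 - x) = 1 - f(x); that is, the graph of Bourbaki's function has rotational symmetry about the point (1/2, 1/2). -/

import Mathlib

/-!
The defect `g x = f (1 - x) + f x - 1` is continuous on `[0, 1]`, and the three functional
equations show that on each third of `[0, 1]` it is `2/3`, `1/3` or `2/3` times the defect at
the preimage point. Hence `max |g| ≤ (2/3) · max |g|`, so `g = 0`.
-/

open intervalIntegral Set

theorem IsCompact.eqOn_zero_of_forall_exists_norm_le_mul {X E : Type*} [TopologicalSpace X]
    [NormedAddCommGroup E] {s : Set X} (hs : IsCompact s) {g : X → E} (hg : ContinuousOn g s)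
    {c : ℝ} (hc : c < 1) (h : ∀ x ∈ s, ∃ y ∈ s, ‖g x‖ ≤ c * ‖g y‖) :
    EqOn g 0 s := by
  intro x hx
  obtain ⟨z, hz, hmax⟩ := hs.exists_isMaxOn ⟨x, hx⟩ hg.norm
  obtain ⟨y, hy, hzy⟩ := h z hz
  have hyz : ‖g y‖ ≤ ‖g z‖ := hmax hy
  have hz0 : ‖g z‖ ≤ 0 := by
    rcases le_or_gt 0 c with hc0 | hc0
    · nlinarith [mul_le_mul_of_nonneg_left hyz hc0]
    · nlinarith [norm_nonneg (g y)]
  exact norm_le_zero_iff.mp ((hmax hx).trans hz0)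

noncomputable def symmDefect (f : ℝ → ℝ) (x : ℝ) : ℝ := f (1 - x) + f x - 1

theorem ContinuousOn.symmDefect {f : ℝ → ℝ} (hf : ContinuousOn f (Icc 0 1)) :
    ContinuousOn (symmDefect f) (Icc 0 1) :=
  ((hf.comp (continuousOn_const.sub continuousOn_id) fun _ hx => Icc.one_sub_mem hx).add
    hf).sub continuousOn_const

section

variable {f : ℝ → ℝ} {y : ℝ}

theorem symmDefect_div_three (hw1 : ∀ x ∈ Icc (0:ℝ) 1, f (x / 3) = (2/3) * f x)
    (hw3 : ∀ x ∈ Icc (0:ℝ) 1, f ((2 + x) / 3) = 1/3 + (2/3) * f x) (hy : y ∈ Icc (0:ℝ) 1) :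
    symmDefect f (y / 3) = (2/3) * symmDefect f y := by
  have h := hw3 (1 - y) (Icc.one_sub_mem hy)
  rw [show (2 + (1 - y)) / 3 = 1 - y / 3 by ring] at h
  simp only [symmDefect, h, hw1 y hy]
  ring

theorem symmDefect_two_sub_div_three
    (hw2 : ∀ x ∈ Icc (0:ℝ) 1, f ((2 - x) / 3) = (1/3) * (1 + f x)) (hy : y ∈ Icc (0:ℝ) 1) :
    symmDefect f ((2 - y) / 3) = (1/3) * symmDefect f y := by
  have h := hw2 (1 - y) (Icc.one_sub_mem hy)
  rw [show (2 - (1 - y)) / 3 = 1 - (2 - y) / 3 by ring] at h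
  simp only [symmDefect, h, hw2 y hy]
  ring

theorem symmDefect_two_add_div_three (hw1 : ∀ x ∈ Icc (0:ℝ) 1, f (x / 3) = (2/3) * f x)
    (hw3 : ∀ x ∈ Icc (0:ℝ) 1, f ((2 + x) / 3) = 1/3 + (2/3) * f x) (hy : y ∈ Icc (0:ℝ) 1) :
    symmDefect f ((2 + y) / 3) = (2/3) * symmDefect f y := by
  have h := hw1 (1 - y) (Icc.one_sub_mem hy)
  rw [show (1 - y) / 3 = 1 - (2 + y) / 3 by ring] at h
  simp only [symmDefect, h, hw3 y hy]
  ring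

theorem exists_abs_symmDefect_le (hw1 : ∀ x ∈ Icc (0:ℝ) 1, f (x / 3) = (2/3) * f x)
    (hw2 : ∀ x ∈ Icc (0:ℝ) 1, f ((2 - x) / 3) = (1/3) * (1 + f x))
    (hw3 : ∀ x ∈ Icc (0:ℝ) 1, f ((2 + x) / 3) = 1/3 + (2/3) * f x) {x : ℝ}
    (hx : x ∈ Icc (0:ℝ) 1) :
    ∃ y ∈ Icc (0:ℝ) 1, |symmDefect f x| ≤ (2/3) * |symmDefect f y| := by
  obtain ⟨hx0, hx1⟩ := hx
  rcases le_or_gt x (1/3) with hx13 | hx13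
  · refine ⟨3 * x, ⟨by linarith, by linarith⟩, le_of_eq ?_⟩
    have hy : 3 * x ∈ Icc (0:ℝ) 1 := ⟨by linarith, by linarith⟩
    rw [← abs_of_pos (by norm_num : (0:ℝ) < 2/3), ← abs_mul, ← symmDefect_div_three hw1 hw3 hy,
      mul_div_cancel_left₀ x three_ne_zero]
  rcases le_or_gt x (2/3) with hx23 | hx23
  · refine ⟨2 - 3 * x, ⟨by linarith, by linarith⟩, ?_⟩
    have hy : 2 - 3 * x ∈ Icc (0:ℝ) 1 := ⟨by linarith, by linarith⟩
    calc |symmDefect f x| = |symmDefect f ((2 - (2 - 3 * x)) / 3)| := by ring_nf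
      _ = (1/3) * |symmDefect f (2 - 3 * x)| := by
        rw [symmDefect_two_sub_div_three hw2 hy, abs_mul, abs_of_pos (by norm_num)]
      _ ≤ (2/3) * |symmDefect f (2 - 3 * x)| := by gcongr; norm_num
  · refine ⟨3 * x - 2, ⟨by linarith, by linarith⟩, le_of_eq ?_⟩
    have hy : 3 * x - 2 ∈ Icc (0:ℝ) 1 := ⟨by linarith, by linarith⟩
    rw [← abs_of_pos (by norm_num : (0:ℝ) < 2/3), ← abs_mul,
      ← symmDefect_two_add_div_three hw1 hw3 hy]
    ring_nf

end

theorem bourbaki_stmt_general (f : ℝ → ℝ)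
    (hcont : ContinuousOn f (Set.Icc 0 1))
    (hw1 : ∀ x ∈ Set.Icc (0:ℝ) 1, f (x / 3) = (2/3) * f x)
    (hw2 : ∀ x ∈ Set.Icc (0:ℝ) 1, f ((2 - x) / 3) = (1/3) * (1 + f x))
    (hw3 : ∀ x ∈ Set.Icc (0:ℝ) 1, f ((2 + x) / 3) = 1/3 + (2/3) * f x) :
    ∀ x ∈ Set.Icc (0:ℝ) 1, f (1 - x) = 1 - f x := by
  have hdefect : EqOn (symmDefect f) 0 (Icc 0 1) :=
    isCompact_Icc.eqOn_zero_of_forall_exists_norm_le_mul hcont.symmDefect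
      (by norm_num : (2/3 : ℝ) < 1) fun _ hx => by
        simpa only [Real.norm_eq_abs] using exists_abs_symmDefect_le hw1 hw2 hw3 hx
  intro x hx
  have hx0 : f (1 - x) + f x - 1 = 0 := hdefect hx
  linarith

theorem bourbaki_stmt (f : ℝ → ℝ)
    (hcont : ContinuousOn f (Set.Icc 0 1))
    (h0 : f 0 = 0) (h1 : f 1 = 1)
    (hw1 : ∀ x ∈ Set.Icc (0:ℝ) 1, f (x / 3) = (2/3) * f x)
    (hw2 : ∀ x ∈ Set.Icc (0:ℝ) 1, f ((2 - x) / 3) = (1/3) * (1 + f x))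
    (hw3 : ∀ x ∈ Set.Icc (0:ℝ) 1, f ((2 + x) / 3) = 1/3 + (2/3) * f x) :
    ∀ x ∈ Set.Icc (0:ℝ) 1, f (1 - x) = 1 - f x :=
  bourbaki_stmt_general f hcont hw1 hw2 hw3
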